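/- Let w = w₁w₂⋯w_p be a reduced expression for an element w of a Coxeter group W, and let x ≤ w in Bruhat order. Then there exists a unique mask σ ∈ {0,1}^p on this reduced expression such that the subword w^σ is a reduced expression for x and σ has no defects, i.e., for every position j with 2 ≤ j ≤ p, multiplying the subword determined by σ restricted to positions 1,…,j−1 on the right by w_j increases length. -/

import Mathlib

open CoxeterSystem

variable {B W : Type*} [Group W] {M : CoxeterMatrix B}

/-- The subword of `ω` selected by the mask `σ` (positions with mask-value `true`). -/
def maskSubword {α : Type*} (ω : List α) (σ : List Bool) : List α :=
  (ω.zip σ).filterMap (fun p => if p.2 then some p.1 else none)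

/-- The group element `w^σ` determined by a mask `σ` on the word `ω`. -/
def maskProd (cs : CoxeterSystem M W) (ω : List B) (σ : List Bool) : W :=
  cs.wordProd (maskSubword ω σ)

/-- Bruhat order: `x ≤ w` iff some reduced word for `w` has a subword whose product is `x`. -/
def bruhatLE (cs : CoxeterSystem M W) (x w : W) : Prop :=
  ∃ ω φ : List B, cs.IsReduced ω ∧ cs.wordProd ω = w ∧ φ.Sublist ω ∧ cs.wordProd φ = x

/-- Strict Bruhat order. -/
def bruhatLT (cs : CoxeterSystem M W) (x w : W) : Prop :=
  bruhatLE cs x w ∧ x ≠ w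

/-- `z` covers `x` in Bruhat order. -/
def bruhatCovers (cs : CoxeterSystem M W) (x z : W) : Prop :=
  bruhatLT cs x z ∧ cs.length z = cs.length x + 1

/-- Position `j` (0-indexed) is a defect of the mask `σ` on the word `ω`:
multiplying the product of the first `j` masked letters by `ω_j` decreases length. -/
def IsDefect (cs : CoxeterSystem M W) (ω : List B) (σ : List Bool) (j : ℕ) : Prop :=
  ∃ h : j < ω.length, cs.IsRightDescent (maskProd cs (ω.take j) (σ.take j)) (ω.get ⟨j, h⟩)

/-- A constant mask: a mask with no defect positions. -/
def IsConstantMask (cs : CoxeterSystem M W) (ω : List B) (σ : List Bool) : Prop :=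
  σ.length = ω.length ∧ ∀ j, ¬ IsDefect cs ω σ j

/-!
Constant masks are determined by their products: reading a mask from the right, its last bit is `1`
exactly when the last letter is a right descent of the product, and the selected letters only ever
increase the length, so the masked subword is reduced. For existence, the subword definition of the
Bruhat order agrees with the chain definition (`u < u t` for reflections `t` with
`ℓ u < ℓ (u t)`), and the lifting property `x ≤ w s → x ≤ w ∨ x s ≤ w` lets one peel off the last
letter of the word. Both rest on the strong exchange property, which comes from the action of `W`
on `W × ZMod 2` through which the parity of the number of occurrences of `t` in the right inversion
sequence of a word depends only on its product.
-/

open List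

namespace CoxeterSystem

open scoped Classical

variable (cs : CoxeterSystem M W)

local prefix:100 "s " => cs.simple
local prefix:100 "π " => cs.wordProd
local prefix:100 "ℓ " => cs.length
local prefix:100 "ris " => cs.rightInvSeq
local prefix:100 "lis " => cs.leftInvSeq

noncomputable def reflSign (i : B) : Equiv.Perm (W × ZMod 2) :=
  Function.Involutive.toPerm (fun p ↦ (s i * p.1 * s i, p.2 + if p.1 = s i then 1 else 0)) <| by
    rintro ⟨t, ε⟩
    have hconj : s i * (s i * t * s i) * s i = t := by simp [← mul_assoc]
    have hiff : s i * t * s i = s i ↔ t = s i := by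
      constructor
      · intro h; simpa [h] using hconj.symm
      · rintro rfl; simp
    ext
    · exact hconj
    · simp only [hiff, add_assoc]
      split_ifs <;> decide +revert

theorem reflSign_apply (i : B) (t : W) (ε : ZMod 2) :
    cs.reflSign i (t, ε) = (s i * t * s i, ε + if t = s i then 1 else 0) := rfl

theorem prod_map_reflSign_apply (ω : List B) (t : W) (ε : ZMod 2) :
    (ω.map cs.reflSign).prod (t, ε) = (π ω * t * (π ω)⁻¹, ε + (ris ω).count t) := by
  induction ω generalizing t ε with
  | nil => simp
  | cons i ω ih =>
    have hiff : π ω * t * (π ω)⁻¹ = s i ↔ (π ω)⁻¹ * s i * π ω = t := by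
      constructor <;> intro h <;> simp [← h, mul_assoc]
    simp only [map_cons, prod_cons, Equiv.Perm.mul_apply, ih, reflSign_apply, rightInvSeq,
      count_cons, beq_iff_eq, hiff, wordProd_cons, mul_inv_rev, inv_simple]
    ext
    · simp only [mul_assoc]
    · push_cast; ring

theorem alternatingWord_two_mul_add_two (i i' : B) (m : ℕ) :
    alternatingWord i i' (2 * m + 2) = i :: i' :: alternatingWord i i' (2 * m) := by
  simp [alternatingWord_succ']

theorem reverse_alternatingWord_two_mul (i i' : B) (m : ℕ) :
    (alternatingWord i i' (2 * m)).reverse = alternatingWord i' i (2 * m) := by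
  induction m with
  | zero => rfl
  | succ m ih =>
    rw [Nat.mul_succ, alternatingWord_two_mul_add_two, reverse_cons, reverse_cons, ih]
    simp [alternatingWord]

theorem prod_map_alternatingWord_two_mul {G : Type*} [Monoid G] (f : B → G) (i i' : B) (m : ℕ) :
    ((alternatingWord i i' (2 * m)).map f).prod = (f i * f i') ^ m := by
  induction m with
  | zero => simp [alternatingWord]
  | succ m ih =>
    rw [Nat.mul_succ, alternatingWord_two_mul_add_two, map_cons, map_cons, prod_cons, prod_cons, ih,
      pow_succ', mul_assoc]

/-- The reflections in the inversion sequence of the braid word `(s i s i')^{M i i'}` repeat with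
period `M i i'`. -/
theorem even_count_rightInvSeq_alternatingWord (i i' : B) (t : W) :
    Even ((ris (alternatingWord i i' (2 * M i i'))).count t) := by
  rw [← reverse_alternatingWord_two_mul i' i, rightInvSeq_reverse, count_reverse]
  set L := lis (alternatingWord i' i (2 * M i i'))
  have hL : ∀ k (hk : k < L.length), L[k] = s i' * (s i * s i') ^ k := by
    intro k hk
    rw [cs.getElem_leftInvSeq_alternatingWord i' i _ k (by simpa [L] using hk),
      prod_alternatingWord_eq_mul_pow, if_neg (Nat.not_even_two_mul_add_one k)]
    congr 2
    omega
  have hperiod : L.drop (M i i') = L.take (M i i') := by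
    apply ext_getElem
    · simp [L]; omega
    · intro k h₁ h₂
      rw [getElem_drop, getElem_take, hL, hL, pow_add, cs.simple_mul_simple_pow, one_mul]
  rw [← take_append_drop (M i i') L, count_append, hperiod]
  exact ⟨_, rfl⟩

theorem isLiftable_reflSign : M.IsLiftable cs.reflSign := by
  intro i i'
  ext1 ⟨t, ε⟩
  have hword : π (alternatingWord i i' (2 * M i i')) = 1 := by
    rw [prod_alternatingWord_eq_mul_pow, if_pos (even_two_mul _), Nat.mul_div_cancel_left _ two_pos,
      cs.simple_mul_simple_pow, one_mul]
  rw [← prod_map_alternatingWord_two_mul, prod_map_reflSign_apply, hword,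
    (cs.even_count_rightInvSeq_alternatingWord i i' t).natCast_zmod_two]
  simp

noncomputable def signRep : W →* Equiv.Perm (W × ZMod 2) :=
  cs.lift ⟨cs.reflSign, cs.isLiftable_reflSign⟩

theorem signRep_wordProd (ω : List B) : cs.signRep (π ω) = (ω.map cs.reflSign).prod := by
  rw [wordProd, map_list_prod, map_map]
  congr 2
  ext1 i
  exact cs.lift_apply_simple cs.isLiftable_reflSign i

/-- The parity of the number of occurrences of `t` in the right inversion sequence of any word
for `w`. -/
noncomputable def inversionParity (w t : W) : ZMod 2 := (cs.signRep w (t, 0)).2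

theorem inversionParity_wordProd (ω : List B) (t : W) :
    cs.inversionParity (π ω) t = (ris ω).count t := by
  rw [inversionParity, signRep_wordProd, prod_map_reflSign_apply, zero_add]

theorem signRep_apply (w t : W) (ε : ZMod 2) :
    cs.signRep w (t, ε) = (w * t * w⁻¹, ε + cs.inversionParity w t) := by
  obtain ⟨ω, rfl⟩ := cs.wordProd_surjective w
  rw [inversionParity_wordProd, signRep_wordProd, prod_map_reflSign_apply]

theorem inversionParity_mul (u v t : W) :
    cs.inversionParity (u * v) t = cs.inversionParity v t + cs.inversionParity u (v * t * v⁻¹) := by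
  rw [inversionParity, map_mul, Equiv.Perm.mul_apply, signRep_apply, signRep_apply, zero_add]

theorem inversionParity_one (t : W) : cs.inversionParity 1 t = 0 := by
  simp [inversionParity]

theorem inversionParity_simple_self (i : B) : cs.inversionParity (s i) (s i) = 1 := by
  simpa [rightInvSeq] using cs.inversionParity_wordProd [i] (s i)

/-- Writing `t = u s u⁻¹`, the cocycle identity gives `t` the parity `a + 1 + a` with
`a = inversionParity u s`. -/
theorem IsReflection.inversionParity_self {t : W} (ht : cs.IsReflection t) :
    cs.inversionParity t t = 1 := by
  obtain ⟨u, i, rfl⟩ := ht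
  have hinv : cs.inversionParity u⁻¹ (u * s i * u⁻¹) = cs.inversionParity u (s i) := by
    have h := cs.inversionParity_mul u⁻¹ u (s i)
    rw [inv_mul_cancel, inversionParity_one, eq_comm, CharTwo.add_eq_zero] at h
    exact h.symm
  have hus : cs.inversionParity (u * s i) (s i) = cs.inversionParity u (s i) + 1 := by
    rw [inversionParity_mul, inversionParity_simple_self, mul_inv_cancel_right, add_comm]
  rw [inversionParity_mul, hinv, show u⁻¹ * (u * s i * u⁻¹) * u⁻¹⁻¹ = s i by group, hus,
    CharTwo.add_cancel_left]

theorem mem_rightInvSeq_of_isRightInversion {ω : List B} {t : W}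
    (ht : cs.IsRightInversion (π ω) t) : t ∈ ris ω := by
  by_contra hnot
  obtain ⟨κ, hκ, hκprod⟩ := cs.exists_isReduced (π ω * t)
  have hodd : cs.inversionParity (π κ) t = 1 := by
    rw [← hκprod, inversionParity_mul, ht.1.inversionParity_self, mul_inv_cancel_right,
      inversionParity_wordProd, count_eq_zero_of_not_mem hnot, Nat.cast_zero, add_zero]
  have hmem : t ∈ ris κ := by
    rw [inversionParity_wordProd] at hodd
    exact count_pos_iff.mp (Nat.pos_of_ne_zero fun h ↦ by simp [h] at hodd)
  have := (cs.isRightInversion_of_mem_rightInvSeq hκ hmem).2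
  rw [← hκprod, mul_assoc, ht.1.mul_self, mul_one] at this
  exact ht.2.not_gt this

theorem strong_exchange {ω : List B} {t : W}
    (ht : cs.IsRightInversion (π ω) t) : ∃ j < ω.length, π ω * t = π (ω.eraseIdx j) := by
  obtain ⟨j, hj, rfl⟩ := mem_iff_getElem.mp (cs.mem_rightInvSeq_of_isRightInversion ht)
  refine ⟨j, by simpa using hj, ?_⟩
  rw [← getD_eq_getElem _ 1, wordProd_mul_getD_rightInvSeq]

theorem isReduced_append_singleton_iff {ω : List B} {i : B} :
    cs.IsReduced (ω ++ [i]) ↔ cs.IsReduced ω ∧ ¬cs.IsRightDescent (π ω) i := by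
  rw [not_isRightDescent_iff]
  constructor
  · intro h
    have hω : cs.IsReduced ω := by simpa using h.take ω.length
    refine ⟨hω, ?_⟩
    have := h.eq
    rw [wordProd_append, wordProd_singleton, length_append, length_singleton] at this
    rw [this, hω.eq]
  · rintro ⟨hω, h⟩
    rw [IsReduced, wordProd_append, wordProd_singleton, h, hω.eq, length_append, length_singleton]

theorem isRightDescent_mul_ite {w : W} {i : B} (hw : ¬cs.IsRightDescent w i) (b : Bool) :
    cs.IsRightDescent (w * if b then s i else 1) i ↔ b = true := by
  cases b
  · simpa using hw
  · simpa [cs.isRightDescent_iff_not_isRightDescent_mul (w := w * s i)] using hw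

/-- The chain definition of the Bruhat order. -/
def ChainLE : W → W → Prop :=
  Relation.ReflTransGen fun u v ↦ ∃ t, cs.IsReflection t ∧ u * t = v ∧ ℓ u < ℓ v

variable {cs}

theorem ChainLE.refl (w : W) : cs.ChainLE w w := Relation.ReflTransGen.refl

theorem ChainLE.trans {u v w : W} (huv : cs.ChainLE u v) (hvw : cs.ChainLE v w) :
    cs.ChainLE u w :=
  Relation.ReflTransGen.trans huv hvw

theorem chainLE_mul_of_length_lt {u t : W} (ht : cs.IsReflection t) (h : ℓ u < ℓ (u * t)) :
    cs.ChainLE u (u * t) :=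
  .single ⟨t, ht, rfl, h⟩

theorem chainLE_mul_simple {u : W} {i : B} (h : ¬cs.IsRightDescent u i) :
    cs.ChainLE u (u * s i) :=
  chainLE_mul_of_length_lt (cs.isReflection_simple i) (by rw [not_isRightDescent_iff] at h; omega)

theorem mul_simple_chainLE {u : W} {i : B} (h : cs.IsRightDescent u i) :
    cs.ChainLE (u * s i) u := by
  have := chainLE_mul_of_length_lt (u := u * s i) (cs.isReflection_simple i)
    (by rwa [simple_mul_simple_cancel_right])
  rwa [simple_mul_simple_cancel_right] at this

/-- Exchange `t` against `κ ++ [i]` with `κ` a reduced word for `w s i`: deleting any letter of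
`κ` would make `w t s i` shorter than `w s i`. -/
theorem eq_simple_of_isRightInversion {w t : W} {i : B}
    (ht : cs.IsRightInversion w t) (hle : ℓ (w * s i) ≤ ℓ (w * t * s i)) : t = s i := by
  obtain ⟨κ, hκ, hκprod⟩ := cs.exists_isReduced (w * s i)
  have hw : π (κ ++ [i]) = w := by
    rw [wordProd_append, ← hκprod, wordProd_singleton, simple_mul_simple_cancel_right]
  obtain ⟨j, hj, hwt⟩ := cs.strong_exchange (hw ▸ ht)
  rw [hw] at hwt
  rw [length_append, length_singleton] at hj
  rcases Nat.lt_succ_iff_lt_or_eq.1 hj with hj | rfl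
  · rw [eraseIdx_append_of_lt_length hj, wordProd_append, wordProd_singleton] at hwt
    have hlen : ℓ (w * t * s i) ≤ κ.length - 1 := by
      rw [hwt, simple_mul_simple_cancel_right, ← length_eraseIdx_of_lt hj]
      exact cs.length_wordProd_le _
    rw [hκprod, hκ.eq] at hle
    omega
  · rw [eraseIdx_append_of_length_le le_rfl, Nat.sub_self, eraseIdx_cons_zero, append_nil,
      ← hκprod] at hwt
    exact mul_left_cancel hwt

theorem chainLE_mul_simple_or_of_length_lt {p t : W} (ht : cs.IsReflection t)
    (hlt : ℓ p < ℓ (p * t)) (i : B) :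
    cs.ChainLE (p * s i) (p * t) ∨ cs.ChainLE (p * s i) (p * t * s i) := by
  by_cases h : ℓ (p * s i) < ℓ (p * t * s i)
  · right
    have hconj : p * s i * (s i * t * (s i)⁻¹) = p * t * s i := by simp [mul_assoc]
    rw [← hconj] at h ⊢
    exact chainLE_mul_of_length_lt (ht.conj _) h
  · left
    have hpt : p * t * t = p := by rw [mul_assoc, ht.mul_self, mul_one]
    have hts := eq_simple_of_isRightInversion ⟨ht, by rwa [hpt]⟩
      (by rwa [hpt, ← not_lt])
    rw [hts]
    exact .refl _

theorem ChainLE.mul_simple_or {u w : W} (h : cs.ChainLE u w) (i : B) :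
    cs.ChainLE (u * s i) w ∨ cs.ChainLE (u * s i) (w * s i) := by
  induction h using Relation.ReflTransGen.head_induction_on with
  | refl => exact .inr (.refl _)
  | head hstep hvw ih =>
    obtain ⟨t, ht, rfl, hlt⟩ := hstep
    rcases chainLE_mul_simple_or_of_length_lt ht hlt i with h | h
    · exact .inl (h.trans hvw)
    · exact ih.imp h.trans h.trans

theorem chainLE_wordProd_of_sublist {ω φ : List B} (hω : cs.IsReduced ω) (hφ : φ <+ ω) :
    cs.ChainLE (π φ) (π ω) := by
  induction ω using List.reverseRecOn generalizing φ with
  | nil => rw [sublist_nil.1 hφ]; exact .refl _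
  | append_singleton η i ih =>
    obtain ⟨hη, hasc⟩ := cs.isReduced_append_singleton_iff.1 hω
    rw [wordProd_append, wordProd_singleton]
    have hstep := chainLE_mul_simple hasc
    obtain ⟨φ₁, φ₂, rfl, h₁, h₂⟩ := sublist_append_iff.1 hφ
    rcases sublist_singleton.1 h₂ with rfl | rfl
    · rw [append_nil]
      exact (ih hη h₁).trans hstep
    · rw [wordProd_append, wordProd_singleton]
      exact (ChainLE.mul_simple_or (ih hη h₁) i).elim (·.trans hstep) id

theorem ChainLE.exists_sublist {x : W} {ω : List B} (h : cs.ChainLE x (π ω)) :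
    ∃ φ, φ <+ ω ∧ π φ = x := by
  generalize hw : π ω = w at h
  induction h generalizing ω with
  | refl => exact ⟨ω, .refl _, hw⟩
  | @tail u _ _ hstep ih =>
    obtain ⟨t, ht, rfl, hlt⟩ := hstep
    have hdel : π ω * t = u := by rw [hw, mul_assoc, ht.mul_self, mul_one]
    obtain ⟨j, -, hj⟩ := cs.strong_exchange (ω := ω) ⟨ht, by rwa [hdel, hw]⟩
    obtain ⟨φ, hφ, rfl⟩ := ih (ω := ω.eraseIdx j) (by rw [← hj, hdel])
    exact ⟨φ, hφ.trans (eraseIdx_sublist _ _), rfl⟩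

variable (cs) in
theorem bruhatLE_iff_chainLE {x w : W} : bruhatLE cs x w ↔ cs.ChainLE x w := by
  constructor
  · rintro ⟨ω, φ, hω, rfl, hφ, rfl⟩
    exact chainLE_wordProd_of_sublist hω hφ
  · intro h
    obtain ⟨ω, hω, rfl⟩ := cs.exists_isReduced w
    obtain ⟨φ, hφ, rfl⟩ := ChainLE.exists_sublist h
    exact ⟨ω, φ, hω, rfl, hφ, rfl⟩

theorem ChainLE.chainLE_or_mul_simple_chainLE {x w : W} {i : B} (h : cs.ChainLE x (w * s i)) :
    cs.ChainLE x w ∨ cs.ChainLE (x * s i) w := by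
  obtain ⟨η, hη, rfl⟩ := cs.exists_isReduced w
  rw [← wordProd_singleton, ← wordProd_append] at h
  obtain ⟨φ, hφ, rfl⟩ := ChainLE.exists_sublist h
  obtain ⟨φ₁, φ₂, rfl, h₁, h₂⟩ := sublist_append_iff.1 hφ
  rcases sublist_singleton.1 h₂ with rfl | rfl
  · left
    simpa using chainLE_wordProd_of_sublist hη h₁
  · right
    simpa [wordProd_append] using chainLE_wordProd_of_sublist hη h₁

end CoxeterSystem

section Mask

variable {cs : CoxeterSystem M W} {η ω : List B} {i : B} {σ : List Bool}

theorem maskSubword_append_singleton (hlen : σ.length = η.length) (b : Bool) :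
    maskSubword (η ++ [i]) (σ ++ [b]) = maskSubword η σ ++ if b then [i] else [] := by
  rw [maskSubword, zip_append hlen.symm, filterMap_append]
  cases b <;> rfl

theorem maskProd_append_singleton (hlen : σ.length = η.length) (b : Bool) :
    maskProd cs (η ++ [i]) (σ ++ [b]) = maskProd cs η σ * if b then cs.simple i else 1 := by
  rw [maskProd, maskSubword_append_singleton hlen, wordProd_append]
  cases b <;> simp [maskProd]

theorem isDefect_append_singleton (hlen : σ.length = η.length) (b : Bool) (j : ℕ) :
    IsDefect cs (η ++ [i]) (σ ++ [b]) j ↔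
      IsDefect cs η σ j ∨ j = η.length ∧ cs.IsRightDescent (maskProd cs η σ) i := by
  rcases lt_trichotomy j η.length with hj | rfl | hj
  · simp [IsDefect, hj, hj.ne, hj.le, take_append_of_le_length hj.le,
      take_append_of_le_length (hlen ▸ hj.le), getElem_append_left hj]
  · simp [IsDefect, ← hlen]
  · simp [IsDefect, hj.ne', Nat.not_lt_of_gt hj, not_le.2 hj]

theorem isConstantMask_nil_iff : IsConstantMask cs [] σ ↔ σ = [] :=
  ⟨fun h ↦ length_eq_zero_iff.1 h.1, by rintro rfl; exact ⟨rfl, fun j ⟨hj, _⟩ ↦ by simp at hj⟩⟩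

theorem isConstantMask_append_singleton_iff :
    IsConstantMask cs (η ++ [i]) σ ↔ ∃ σ₀ b, σ = σ₀ ++ [b] ∧ IsConstantMask cs η σ₀ ∧
      ¬cs.IsRightDescent (maskProd cs η σ₀) i := by
  constructor
  · rintro ⟨hlen, hdef⟩
    obtain ⟨σ₀, b, rfl⟩ : ∃ σ₀ b, σ = σ₀ ++ [b] := by
      rcases eq_nil_or_concat σ with rfl | ⟨σ₀, b, rfl⟩
      · simp at hlen
      · exact ⟨σ₀, b, concat_eq_append⟩
    have hlen₀ : σ₀.length = η.length := by simpa using hlen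
    simp only [isDefect_append_singleton hlen₀, not_or, not_and] at hdef
    exact ⟨σ₀, b, rfl, ⟨hlen₀, fun j ↦ (hdef j).1⟩, (hdef _).2 rfl⟩
  · rintro ⟨σ₀, b, rfl, ⟨hlen₀, hdef⟩, hasc⟩
    refine ⟨by simp [hlen₀], fun j ↦ ?_⟩
    rw [isDefect_append_singleton hlen₀]
    rintro (h | ⟨rfl, h⟩)
    exacts [hdef j h, hasc h]

theorem IsConstantMask.isReduced_maskSubword (hσ : IsConstantMask cs ω σ) :
    cs.IsReduced (maskSubword ω σ) := by
  induction ω using List.reverseRecOn generalizing σ with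
  | nil => simp [isConstantMask_nil_iff.1 hσ, maskSubword, CoxeterSystem.IsReduced]
  | append_singleton η i ih =>
    obtain ⟨σ₀, b, rfl, hσ₀, hasc⟩ := isConstantMask_append_singleton_iff.1 hσ
    rw [maskSubword_append_singleton hσ₀.1]
    cases b
    · simpa using ih hσ₀
    · exact cs.isReduced_append_singleton_iff.2 ⟨ih hσ₀, hasc⟩

/-- The last letter of a constant mask is read off from its product: it is `1` exactly when
`s i` is a right descent of the product. -/
theorem IsConstantMask.eq_of_maskProd_eq {σ' : List Bool} (hσ : IsConstantMask cs ω σ)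
    (hσ' : IsConstantMask cs ω σ') (h : maskProd cs ω σ = maskProd cs ω σ') : σ = σ' := by
  induction ω using List.reverseRecOn generalizing σ σ' with
  | nil => rw [isConstantMask_nil_iff.1 hσ, isConstantMask_nil_iff.1 hσ']
  | append_singleton η i ih =>
    obtain ⟨σ₀, b, rfl, hσ₀, hasc⟩ := isConstantMask_append_singleton_iff.1 hσ
    obtain ⟨σ₀', b', rfl, hσ₀', hasc'⟩ := isConstantMask_append_singleton_iff.1 hσ'
    rw [maskProd_append_singleton hσ₀.1, maskProd_append_singleton hσ₀'.1] at h
    have hb : b = b' := by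
      rw [Bool.eq_iff_iff, ← cs.isRightDescent_mul_ite hasc b, ← cs.isRightDescent_mul_ite hasc' b',
        h]
    subst hb
    rw [ih hσ₀ hσ₀' (mul_right_cancel h)]

theorem exists_isConstantMask_maskProd_eq {x : W} (hx : cs.ChainLE x (cs.wordProd ω)) :
    ∃ σ, IsConstantMask cs ω σ ∧ maskProd cs ω σ = x := by
  induction ω using List.reverseRecOn generalizing x with
  | nil =>
    obtain ⟨φ, hφ, rfl⟩ := ChainLE.exists_sublist hx
    rw [sublist_nil.1 hφ]
    exact ⟨[], isConstantMask_nil_iff.2 rfl, rfl⟩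
  | append_singleton η i ih =>
    rw [wordProd_append, wordProd_singleton] at hx
    have hx' := ChainLE.chainLE_or_mul_simple_chainLE hx
    by_cases hdesc : cs.IsRightDescent x i
    · obtain ⟨σ, hσ, hσx⟩ := ih (hx'.elim (mul_simple_chainLE hdesc).trans id)
      refine ⟨σ ++ [true], isConstantMask_append_singleton_iff.2 ⟨σ, true, rfl, hσ, ?_⟩, ?_⟩
      · rwa [hσx, ← isRightDescent_iff_not_isRightDescent_mul]
      · rw [maskProd_append_singleton hσ.1, hσx, if_pos rfl, simple_mul_simple_cancel_right]
    · obtain ⟨σ, hσ, hσx⟩ := ih (hx'.elim id (chainLE_mul_simple hdesc).trans)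
      refine ⟨σ ++ [false],
        isConstantMask_append_singleton_iff.2 ⟨σ, false, rfl, hσ, hσx ▸ hdesc⟩, ?_⟩
      rw [maskProd_append_singleton hσ.1, hσx, if_neg Bool.false_ne_true, mul_one]

end Mask

theorem unique_constant_mask_general (cs : CoxeterSystem M W) {w x : W} {ω : List B}
    (hprod : cs.wordProd ω = w) (hx : bruhatLE cs x w) :
    ∃! σ : List Bool, IsConstantMask cs ω σ ∧ cs.IsReduced (maskSubword ω σ) ∧
      maskProd cs ω σ = x := by
  subst hprod
  obtain ⟨σ, hσ, rfl⟩ := exists_isConstantMask_maskProd_eq ((bruhatLE_iff_chainLE cs).1 hx)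
  exact ⟨σ, ⟨hσ, hσ.isReduced_maskSubword, rfl⟩, fun σ' ⟨hσ', _, h⟩ ↦ hσ'.eq_of_maskProd_eq hσ h⟩

/-- **Deodhar's lemma.** For any reduced expression `ω` of `w` and any `x ≤ w`, there is a
unique constant (defect-free) mask `σ` on `ω` such that `ω^σ` is a reduced expression for `x`. -/
theorem unique_constant_mask (cs : CoxeterSystem M W) {w x : W} {ω : List B}
    (hred : cs.IsReduced ω) (hprod : cs.wordProd ω = w) (hx : bruhatLE cs x w) :
    ∃! σ : List Bool, IsConstantMask cs ω σ ∧ cs.IsReduced (maskSubword ω σ) ∧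
      maskProd cs ω σ = x :=
  unique_constant_mask_general cs hprod hx
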